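/- arXiv:math/0703194 — 5 statements merged into one kernel-verified Lean document; each statement's English description precedes it below -/
import Mathlib

section
/- Let n ≥ 2 and p ≥ 1. Let (x_m) and (y_k) be sequences in ℝⁿ ∖ {0} with |x_m| → ∞ and |y_k| → ∞. Define D_p(X,Y) := inf_{k,m} |x_m − y_k| / |x_m|^{2−p} and D_p(Y,X) := inf_{k,m} |y_k − x_m| / |y_k|^{2−p}. Then D_p(X,Y) = 0 if and only if D_p(Y,X) = 0 (equivalently: either both quantities are zero or both are non-zero). -/
open Filter Topology Set
open scoped ENNReal NNReal

noncomputable section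

/-- `E n` is the Euclidean space `ℝⁿ`. -/
abbrev E (n : ℕ) := EuclideanSpace ℝ (Fin n)

/-- `RS n` is the one-point compactification `R̄ⁿ = ℝⁿ ∪ {∞}`, with `none` playing
the role of the point `∞`. -/
abbrev RS (n : ℕ) := Option (E n)

/-- The chordal (spherical) distance `q` on `R̄ⁿ`. -/
noncomputable def chordal {n : ℕ} : RS n → RS n → ℝ
  | some a, some b => ‖a - b‖ / (Real.sqrt (1 + ‖a‖ ^ 2) * Real.sqrt (1 + ‖b‖ ^ 2))
  | some a, none => 1 / Real.sqrt (1 + ‖a‖ ^ 2)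
  | none, some b => 1 / Real.sqrt (1 + ‖b‖ ^ 2)
  | none, none => 0

/-- The chordal diameter of a subset of `R̄ⁿ`. -/
noncomputable def qdiam {n : ℕ} (S : Set (RS n)) : ℝ :=
  sSup {d | ∃ a ∈ S, ∃ b ∈ S, d = chordal a b}

/-- The weighted ball `B_p(a, r) = {x : |x - a| < r |a|^(2-p)}`. -/
def Bp {n : ℕ} (p : ℝ) (a : E n) (r : ℝ) : Set (E n) :=
  {x | ‖x - a‖ < r * ‖a‖ ^ (2 - p)}

/-- `Qq α g x = limsup_{h → 0, h ≠ 0} q(g(x+h), g(x)) / |h|^α ∈ [0,∞]`. -/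
noncomputable def Qq {n : ℕ} (α : ℝ) (g : E n → RS n) (x : E n) : ℝ≥0∞ :=
  Filter.limsup (fun h : E n => ENNReal.ofReal (chordal (g (x + h)) (g x) / ‖h‖ ^ α))
    (𝓝[≠] (0 : E n))

/-- `(x_m)` is an `M_p`-sequence for `f` with parameter `l`:  `x_m ∈ ℝⁿ \ {0}`,
`|x_m| → ∞`, and for every subsequence and every `δ > 0` the set of values
`c ∈ R̄ⁿ` attained only finitely often by `f` in `⋃_k B_p(x_{m_k}, δ)` has at
most `l` elements. -/
def MpSeq {n : ℕ} (p : ℝ) (l : ℕ) (f : E n → RS n) (x : ℕ → E n) : Prop :=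
  (∀ m, x m ≠ 0) ∧ Tendsto (fun m => ‖x m‖) atTop atTop ∧
    ∀ φ : ℕ → ℕ, StrictMono φ → ∀ δ : ℝ, 0 < δ →
      {c : RS n | (f ⁻¹' {c} ∩ ⋃ k, Bp p (x (φ k)) δ).Finite}.Finite ∧
      {c : RS n | (f ⁻¹' {c} ∩ ⋃ k, Bp p (x (φ k)) δ).Finite}.ncard ≤ l

/-- `(x_m)` is a `μ_p`-sequence for `f` with parameter `l`: `x_m ∈ ℝⁿ \ {0}`,
`|x_m| → ∞`, and there are monotone decreasing null sequences `(L_m)`, `(r_m)` of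
positive numbers such that `f(B_p(x_m, r_m))` covers `R̄ⁿ` except possibly `l`
sets of chordal diameter at most `L_m`. -/
def MuSeq {n : ℕ} (p : ℝ) (l : ℕ) (f : E n → RS n) (x : ℕ → E n) : Prop :=
  (∀ m, x m ≠ 0) ∧ Tendsto (fun m => ‖x m‖) atTop atTop ∧
    ∃ L r : ℕ → ℝ, (∀ m, 0 < L m) ∧ (∀ m, 0 < r m) ∧ Antitone L ∧ Antitone r ∧
      Tendsto L atTop (𝓝 0) ∧ Tendsto r atTop (𝓝 0) ∧
      ∀ m, ∃ Es : Fin l → Set (RS n), (∀ j, qdiam (Es j) ≤ L m) ∧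
        ∀ c : RS n, c ∉ ⋃ j, Es j → c ∈ f '' Bp p (x m) (r m)

/-- Continuity of `g : ℝⁿ → R̄ⁿ` at a point, with respect to the chordal distance. -/
def QContinuousAt {n : ℕ} (g : E n → RS n) (x₀ : E n) : Prop :=
  ∀ ε : ℝ, 0 < ε → ∃ δ : ℝ, 0 < δ ∧ ∀ z : E n, ‖z - x₀‖ < δ → chordal (g z) (g x₀) < ε


lemma ratio_bound (e a b : ℝ) (ha : 0 < a) (hb : 0 < b) (hab : a ≤ 2 * b) (hba : b ≤ 2 * a) :
    a ^ e ≤ 2 ^ |e| * b ^ e := by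
  rcases le_or_gt 0 e with he | he
  · rw [abs_of_nonneg he]
    calc a ^ e ≤ (2 * b) ^ e := Real.rpow_le_rpow ha.le hab he
    _ = 2 ^ e * b ^ e := Real.mul_rpow (by norm_num) hb.le
  · rw [abs_of_neg he]
    have h1 : b / 2 ≤ a := by linarith
    have h2 : a ^ e ≤ (b / 2) ^ e :=
      Real.rpow_le_rpow_of_nonpos (by positivity) h1 he.le
    calc a ^ e ≤ (b / 2) ^ e := h2
    _ = b ^ e / 2 ^ e := Real.div_rpow hb.le (by norm_num : (0:ℝ) ≤ 2) e
    _ = 2 ^ (-e) * b ^ e := by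
        rw [Real.rpow_neg (by norm_num)]; field_simp

lemma per_m_bound {n : ℕ} (v : E n) (y : ℕ → E n)
    (hy : Tendsto (fun k => ‖y k‖) atTop atTop) (hne : ∀ k, v ≠ y k) :
    ∃ c > 0, ∀ k, c ≤ ‖v - y k‖ := by
  obtain ⟨K, hK⟩ := (hy.eventually_ge_atTop (‖v‖ + 1)).exists_forall_of_atTop
  set s : Finset ℝ := insert 1 ((Finset.range K).image fun k => ‖v - y k‖) with hs
  have hsne : s.Nonempty := ⟨1, Finset.mem_insert_self _ _⟩
  refine ⟨s.min' hsne, ?_, ?_⟩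
  · show (0:ℝ) < s.min' hsne
    rw [Finset.lt_min'_iff]
    intro d hd
    rcases Finset.mem_insert.mp hd with h | h
    · simp [h]
    · obtain ⟨k, -, rfl⟩ := Finset.mem_image.mp h
      exact norm_sub_pos_iff.mpr (hne k)
  · intro k
    rcases lt_or_ge k K with hk | hk
    · exact Finset.min'_le _ _ (Finset.mem_insert_of_mem
        (Finset.mem_image.mpr ⟨k, Finset.mem_range.mpr hk, rfl⟩))
    · have h1 : (1 : ℝ) ≤ ‖v - y k‖ := by
        have := hK k hk
        have := norm_sub_norm_le (y k) v
        rw [norm_sub_rev]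
        linarith [abs_le.mp (abs_norm_sub_norm_le (y k) v) |>.1]
      exact le_trans (Finset.min'_le _ _ (Finset.mem_insert_self _ _)) h1

lemma key {n : ℕ} (p : ℝ) (hp : 1 ≤ p) (x y : ℕ → E n)
    (hx0 : ∀ m, x m ≠ 0) (hy0 : ∀ k, y k ≠ 0)
    (hx : Tendsto (fun m => ‖x m‖) atTop atTop)
    (hy : Tendsto (fun k => ‖y k‖) atTop atTop)
    (h0 : sInf {d : ℝ | ∃ m k, d = ‖x m - y k‖ / ‖x m‖ ^ (2 - p)} = 0) :
    sInf {d : ℝ | ∃ k m, d = ‖y k - x m‖ / ‖y k‖ ^ (2 - p)} = 0 := by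
  set S₁ := {d : ℝ | ∃ m k, d = ‖x m - y k‖ / ‖x m‖ ^ (2 - p)} with hS₁
  set S₂ := {d : ℝ | ∃ k m, d = ‖y k - x m‖ / ‖y k‖ ^ (2 - p)} with hS₂
  have hS₁ne : S₁.Nonempty := ⟨_, 0, 0, rfl⟩
  have hS₂ne : S₂.Nonempty := ⟨_, 0, 0, rfl⟩
  have hxpos : ∀ m, (0:ℝ) < ‖x m‖ ^ (2 - p) :=
    fun m => Real.rpow_pos_of_pos (norm_pos_iff.mpr (hx0 m)) _
  have hypos : ∀ k, (0:ℝ) < ‖y k‖ ^ (2 - p) :=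
    fun k => Real.rpow_pos_of_pos (norm_pos_iff.mpr (hy0 k)) _
  have hS₂nonneg : ∀ d ∈ S₂, (0:ℝ) ≤ d := by
    rintro d ⟨k, m, rfl⟩
    exact div_nonneg (norm_nonneg _) (hypos k).le
  have core : ∀ ε : ℝ, 0 < ε → ∃ d ∈ S₂, d ≤ ε := by
    intro ε hε
    by_cases heq : ∃ m k, x m = y k
    · obtain ⟨m, k, hmk⟩ := heq
      exact ⟨0, ⟨k, m, by rw [← hmk, sub_self, norm_zero, zero_div]⟩, hε.le⟩
    · push_neg at heq
      have per : ∀ m, ∃ c > 0, ∀ k, c ≤ ‖x m - y k‖ / ‖x m‖ ^ (2 - p) := by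
        intro m
        obtain ⟨c, hc, hcle⟩ := per_m_bound (x m) y hy (heq m)
        refine ⟨c / ‖x m‖ ^ (2 - p), div_pos hc (hxpos m), fun k => ?_⟩
        gcongr
        exact hcle k
      choose cf cfpos cfle using per
      obtain ⟨M, hM⟩ := (hx.eventually_ge_atTop 1).exists_forall_of_atTop
      set s : Finset ℝ := insert 1 ((Finset.range M).image cf) with hs
      have hsne : s.Nonempty := ⟨1, Finset.mem_insert_self _ _⟩
      set c := s.min' hsne with hc
      have hcpos : 0 < c := by
        rw [hc, Finset.lt_min'_iff]
        intro d hd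
        rcases Finset.mem_insert.mp hd with h | h
        · simp [h]
        · obtain ⟨m, -, rfl⟩ := Finset.mem_image.mp h
          exact cfpos m
      have hclow : ∀ m, m < M → ∀ k, c ≤ ‖x m - y k‖ / ‖x m‖ ^ (2 - p) := by
        intro m hm k
        exact le_trans (Finset.min'_le _ _ (Finset.mem_insert_of_mem
          (Finset.mem_image.mpr ⟨m, Finset.mem_range.mpr hm, rfl⟩))) (cfle m k)
      set C : ℝ := 2 ^ |2 - p| with hC
      have hCpos : (0:ℝ) < C := Real.rpow_pos_of_pos (by norm_num) _
      set ε' := min (min (ε / C) (1 / 2)) c with hε'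
      have hε'pos : 0 < ε' := lt_min (lt_min (div_pos hε hCpos) (by norm_num)) hcpos
      -- extract an element of S₁ below ε'
      have hex : ∃ d ∈ S₁, d < ε' := by
        by_contra hcon
        push_neg at hcon
        have : ε' ≤ sInf S₁ := le_csInf hS₁ne hcon
        rw [h0] at this
        exact absurd this (not_le.mpr hε'pos)
      obtain ⟨d, ⟨m, k, rfl⟩, hd⟩ := hex
      have hmM : M ≤ m := by
        by_contra hmM
        push_neg at hmM
        exact absurd hd (not_lt.mpr (le_trans (min_le_right _ _) (hclow m hmM k)))
      have ha1 : (1:ℝ) ≤ ‖x m‖ := hM m hmM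
      have hapos : (0:ℝ) < ‖x m‖ := lt_of_lt_of_le one_pos ha1
      have hbpos : (0:ℝ) < ‖y k‖ := norm_pos_iff.mpr (hy0 k)
      have hwa : (0:ℝ) < ‖x m‖ ^ (2 - p) := hxpos m
      have ht : ‖x m - y k‖ < ε' * ‖x m‖ ^ (2 - p) := (div_lt_iff₀ hwa).mp hd
      have hwa_le : ‖x m‖ ^ (2 - p) ≤ ‖x m‖ := by
        have := Real.rpow_le_rpow_of_exponent_le ha1 (by linarith : 2 - p ≤ 1)
        rwa [Real.rpow_one] at this
      have hεhalf : ε' ≤ 1 / 2 := le_trans (min_le_left _ _) (min_le_right _ _)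
      have ht2 : ‖x m - y k‖ < ‖x m‖ / 2 := by
        calc ‖x m - y k‖ < ε' * ‖x m‖ ^ (2 - p) := ht
        _ ≤ (1 / 2) * ‖x m‖ := by
            apply mul_le_mul hεhalf hwa_le hwa.le (by norm_num)
        _ = ‖x m‖ / 2 := by ring
      have htri1 : ‖x m‖ - ‖x m - y k‖ ≤ ‖y k‖ := by
        have h := norm_sub_norm_le (x m) (y k)
        linarith
      have htri2 : ‖y k‖ ≤ ‖x m‖ + ‖x m - y k‖ := by
        calc ‖y k‖ = ‖x m - (x m - y k)‖ := by rw [sub_sub_cancel]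
        _ ≤ ‖x m‖ + ‖x m - y k‖ := norm_sub_le _ _
      have hab : ‖x m‖ ≤ 2 * ‖y k‖ := by linarith
      have hba : ‖y k‖ ≤ 2 * ‖x m‖ := by linarith
      have hrb : ‖x m‖ ^ (2 - p) ≤ C * ‖y k‖ ^ (2 - p) :=
        ratio_bound (2 - p) _ _ hapos hbpos hab hba
      have hεC : ε' ≤ ε / C := le_trans (min_le_left _ _) (min_le_left _ _)
      refine ⟨‖y k - x m‖ / ‖y k‖ ^ (2 - p), ⟨k, m, rfl⟩, ?_⟩
      rw [div_le_iff₀ (hypos k), norm_sub_rev]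
      apply le_of_lt
      calc ‖x m - y k‖ < ε' * ‖x m‖ ^ (2 - p) := ht
      _ ≤ (ε / C) * (C * ‖y k‖ ^ (2 - p)) :=
          mul_le_mul hεC hrb hwa.le (div_pos hε hCpos).le
      _ = ε * ‖y k‖ ^ (2 - p) := by field_simp [hCpos.ne']
  have hle : sInf S₂ ≤ 0 := by
    refine le_of_forall_pos_le_add fun ε hε => ?_
    obtain ⟨d, hd, hdle⟩ := core ε hε
    calc sInf S₂ ≤ d := csInf_le ⟨0, hS₂nonneg⟩ hd
    _ ≤ ε := hdle
    _ = 0 + ε := (zero_add ε).symm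
  exact le_antisymm hle (le_csInf hS₂ne hS₂nonneg)

/-- For sequences `X = (x_m)`, `Y = (y_k)` in `ℝⁿ \ {0}` tending to `∞`
in norm, the weighted distance `D_p(X,Y) = inf_{k,m} |x_m - y_k| / |x_m|^(2-p)`
vanishes iff `D_p(Y,X) = inf_{k,m} |y_k - x_m| / |y_k|^(2-p)` vanishes. -/
theorem stmt_0 (n : ℕ) (hn : 2 ≤ n) (p : ℝ) (hp : 1 ≤ p)
    (x y : ℕ → E n) (hx0 : ∀ m, x m ≠ 0) (hy0 : ∀ k, y k ≠ 0)
    (hx : Tendsto (fun m => ‖x m‖) atTop atTop)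
    (hy : Tendsto (fun k => ‖y k‖) atTop atTop) :
    sInf {d : ℝ | ∃ m k, d = ‖x m - y k‖ / ‖x m‖ ^ (2 - p)} = 0 ↔
      sInf {d : ℝ | ∃ k m, d = ‖y k - x m‖ / ‖y k‖ ^ (2 - p)} = 0 := by
  constructor
  · exact key p hp x y hx0 hy0 hx hy
  · exact key p hp y x hy0 hx0 hy hx
end
end

section
/- Let n ≥ 2 and p ≥ 1. Let (x_j) and (y_j) be sequences in ℝⁿ ∖ {0} with |x_j| → ∞ and |x_j − y_j| / |x_j|^{2−p} → 0 as j → ∞. Then |y_j| → ∞, the ratio |y_j|^{2−p} / |x_j|^{2−p} → 1, and |x_j − y_j| / |y_j|^{2−p} → 0 as j → ∞. -/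
open Filter Topology Set
open scoped ENNReal NNReal

noncomputable section

/-- If `(x_j)`, `(y_j)` are sequences in `ℝⁿ \ {0}` with `|x_j| → ∞` and
`|x_j - y_j| / |x_j|^(2-p) → 0`, then `|y_j| → ∞`, `|y_j|^(2-p) / |x_j|^(2-p) → 1`,
and `|x_j - y_j| / |y_j|^(2-p) → 0`. -/
theorem stmt_1 (n : ℕ) (hn : 2 ≤ n) (p : ℝ) (hp : 1 ≤ p)
    (x y : ℕ → E n) (hx0 : ∀ j, x j ≠ 0) (hy0 : ∀ j, y j ≠ 0)
    (hx : Tendsto (fun j => ‖x j‖) atTop atTop)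
    (hclose : Tendsto (fun j => ‖x j - y j‖ / ‖x j‖ ^ (2 - p)) atTop (𝓝 0)) :
    Tendsto (fun j => ‖y j‖) atTop atTop ∧
      Tendsto (fun j => ‖y j‖ ^ (2 - p) / ‖x j‖ ^ (2 - p)) atTop (𝓝 1) ∧
      Tendsto (fun j => ‖x j - y j‖ / ‖y j‖ ^ (2 - p)) atTop (𝓝 0) := by
  have hxpos : ∀ j, (0:ℝ) < ‖x j‖ := fun j => norm_pos_iff.mpr (hx0 j)
  have hypos : ∀ j, (0:ℝ) < ‖y j‖ := fun j => norm_pos_iff.mpr (hy0 j)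
  have hev1 : ∀ᶠ j in atTop, (1:ℝ) ≤ ‖x j‖ := hx.eventually_ge_atTop 1
  -- Step A : ‖x j - y j‖ / ‖x j‖ → 0
  have hA : Tendsto (fun j => ‖x j - y j‖ / ‖x j‖) atTop (𝓝 0) := by
    have hsq : ∀ᶠ j in atTop, ‖x j - y j‖ / ‖x j‖ ≤ ‖x j - y j‖ / ‖x j‖ ^ (2 - p) := by
      filter_upwards [hev1] with j h1
      have : ‖x j‖ ^ (2 - p) ≤ ‖x j‖ := by
        calc ‖x j‖ ^ (2 - p) ≤ ‖x j‖ ^ (1:ℝ) :=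
              Real.rpow_le_rpow_of_exponent_le h1 (by linarith)
          _ = ‖x j‖ := Real.rpow_one _
      exact div_le_div_of_nonneg_left (norm_nonneg _)
        (Real.rpow_pos_of_pos (hxpos j) _) this
    have h0 : ∀ᶠ j in atTop, (0:ℝ) ≤ ‖x j - y j‖ / ‖x j‖ :=
      Eventually.of_forall fun j => div_nonneg (norm_nonneg _) (norm_nonneg _)
    exact squeeze_zero' h0 hsq hclose
  -- Step B : ‖y j‖ / ‖x j‖ → 1
  have hB : Tendsto (fun j => ‖y j‖ / ‖x j‖) atTop (𝓝 1) := by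
    have hsub : Tendsto (fun j => ‖y j‖ / ‖x j‖ - 1) atTop (𝓝 0) := by
      apply squeeze_zero_norm _ hA
      intro j
      have heq : ‖y j‖ / ‖x j‖ - 1 = (‖y j‖ - ‖x j‖) / ‖x j‖ := by
        rw [sub_div, div_self (hxpos j).ne']
      rw [Real.norm_eq_abs, heq, abs_div, abs_of_pos (hxpos j)]
      gcongr
      calc |‖y j‖ - ‖x j‖| ≤ ‖y j - x j‖ := abs_norm_sub_norm_le _ _
        _ = ‖x j - y j‖ := norm_sub_rev _ _
    have := hsub.add_const 1
    simpa using this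
  -- Step C : ‖y j‖ → ∞
  have hC : Tendsto (fun j => ‖y j‖) atTop atTop := by
    have := hB.pos_mul_atTop (C := 1) one_pos hx
    apply this.congr
    intro j
    exact div_mul_cancel₀ _ (hxpos j).ne'
  -- Step D : ratio of rpows → 1
  have hD : Tendsto (fun j => ‖y j‖ ^ (2 - p) / ‖x j‖ ^ (2 - p)) atTop (𝓝 1) := by
    have hcont := (Real.continuousAt_rpow_const 1 (2 - p) (Or.inl one_ne_zero)).tendsto
    rw [Real.one_rpow] at hcont
    have hcomp := hcont.comp hB
    apply hcomp.congr
    intro j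
    simp only [Function.comp]
    rw [Real.div_rpow (norm_nonneg _) (norm_nonneg _)]
  refine ⟨hC, hD, ?_⟩
  -- Step E
  have hD' : Tendsto (fun j => ‖x j‖ ^ (2 - p) / ‖y j‖ ^ (2 - p)) atTop (𝓝 1) := by
    have h := hD.inv₀ one_ne_zero
    rw [inv_one] at h
    apply h.congr
    intro j
    rw [inv_div]
  have := hclose.mul hD'
  rw [zero_mul] at this
  apply this.congr
  intro j
  have hxp : (‖x j‖ : ℝ) ^ (2 - p) ≠ 0 := (Real.rpow_pos_of_pos (hxpos j) _).ne'
  field_simp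
end
end

section
/- Let n ≥ 2, 0 < α ≤ 1 and p > 1. Let f : ℝⁿ → R̄ⁿ and suppose there exist M < ∞ and R ≥ 1 such that q(f(a + |a|^{2−p} x), f(a + |a|^{2−p} y)) ≤ M |x − y|^α for all a ∈ ℝⁿ with |a| ≥ R and all x, y ∈ ℝⁿ with |x| ≤ 2 and |y| ≤ 2 (the uniform Hölder condition characterizing p-Yosida mappings via normality of the rescaled families). Let (a_k) be a sequence in ℝⁿ with |a_k| → ∞ such that the maps x ↦ f(a_k + |a_k|^{2−p} x) converge pointwise on ℝⁿ with respect to the chordal distance q to a map g : ℝⁿ → R̄ⁿ. Then there exists M' < ∞ such that q(g(x), g(y)) ≤ M' |x − y|^α for all x, y ∈ ℝⁿ with |x − y| ≤ 1; in particular sup_{x ∈ ℝⁿ} Q_g(x) < ∞, i.e. g satisfies the uniform Hölder condition characterizing Yosida mappings. -/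
/-!
The chordal distance is the Euclidean distance between images under inverse stereographic
projection, so chordal Hölder bounds survive pointwise limits. Fix `x, y` and put
`b_k = a_k + |a_k|^(2-p) x`. Then `a_k + |a_k|^(2-p) y = b_k + |b_k|^(2-p) ρ_k (y - x)` with
`ρ_k = (|a_k| / |b_k|)^(2-p)`, and `ρ_k → 1` because `|b_k - a_k| = o(|a_k|)` when `p > 1`.
The Hölder condition at the centre `b_k` gives `q ≤ M ρ_k^α |x - y|^α`, and letting `k → ∞`
yields `q(g(x), g(y)) ≤ M |x - y|^α` whenever `|x - y| < 2`, which also bounds `Q_g` by `M`.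
-/

open Filter Topology Set
open scoped ENNReal NNReal

noncomputable section

lemma dist_toLp_prod {V : Type*} [SeminormedAddCommGroup V] (u v : V) (s t : ℝ) :
    dist (WithLp.toLp 2 (u, s)) (WithLp.toLp 2 (v, t)) = √(‖u - v‖ ^ 2 + (s - t) ^ 2) := by
  rw [WithLp.prod_dist_eq_of_L2, dist_eq_norm, Real.dist_eq, sq_abs]
  rfl

/-- Inverse stereographic projection of `R̄ⁿ` onto the sphere of diameter `1` in `ℝⁿ × ℝ`
touching `ℝⁿ × {0}` at the origin. -/
def invStereo {n : ℕ} : RS n → WithLp 2 (E n × ℝ)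
  | some a => WithLp.toLp 2 ((1 + ‖a‖ ^ 2)⁻¹ • a, ‖a‖ ^ 2 / (1 + ‖a‖ ^ 2))
  | none => WithLp.toLp 2 (0, 1)

lemma chordal_eq_dist {n : ℕ} (a b : RS n) :
    chordal a b = dist (invStereo a) (invStereo b) := by
  have hpos (a : E n) : 0 < 1 + ‖a‖ ^ 2 := by positivity
  have hdist_pole (a : E n) : ‖(1 + ‖a‖ ^ 2)⁻¹ • a‖ ^ 2 + (‖a‖ ^ 2 / (1 + ‖a‖ ^ 2) - 1) ^ 2
      = (1 + ‖a‖ ^ 2)⁻¹ := by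
    rw [norm_smul, Real.norm_of_nonneg (inv_nonneg.2 (hpos a).le)]
    field_simp
    ring
  rcases a with _ | a <;> rcases b with _ | b
  · simp [chordal, invStereo]
  · rw [chordal, invStereo, invStereo, dist_toLp_prod, zero_sub, norm_neg, ← neg_sub, neg_sq,
      hdist_pole, Real.sqrt_inv, one_div]
  · rw [chordal, invStereo, invStereo, dist_toLp_prod, sub_zero, hdist_pole, Real.sqrt_inv,
      one_div]
  · have hsq : ‖(1 + ‖a‖ ^ 2)⁻¹ • a - (1 + ‖b‖ ^ 2)⁻¹ • b‖ ^ 2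
          + (‖a‖ ^ 2 / (1 + ‖a‖ ^ 2) - ‖b‖ ^ 2 / (1 + ‖b‖ ^ 2)) ^ 2
        = ‖a - b‖ ^ 2 / ((1 + ‖a‖ ^ 2) * (1 + ‖b‖ ^ 2)) := by
      have := hpos a
      have := hpos b
      rw [norm_sub_sq_real, norm_sub_sq_real, norm_smul, norm_smul, real_inner_smul_left,
        real_inner_smul_right, Real.norm_of_nonneg (inv_nonneg.2 (hpos a).le),
        Real.norm_of_nonneg (inv_nonneg.2 (hpos b).le)]
      field_simp
      ring
    rw [chordal, invStereo, invStereo, dist_toLp_prod, hsq, Real.sqrt_div' _ (by positivity),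
      Real.sqrt_mul (hpos a).le, Real.sqrt_sq (norm_nonneg _)]

lemma tendsto_chordal {n : ℕ} {ι : Type*} {l : Filter ι} {u v : ι → RS n} {a b : RS n}
    (hu : Tendsto (fun i => chordal (u i) a) l (𝓝 0))
    (hv : Tendsto (fun i => chordal (v i) b) l (𝓝 0)) :
    Tendsto (fun i => chordal (u i) (v i)) l (𝓝 (chordal a b)) := by
  simp only [chordal_eq_dist] at *
  exact (tendsto_iff_dist_tendsto_zero.2 hu).dist (tendsto_iff_dist_tendsto_zero.2 hv)

section Rescaling

variable {V : Type*} [NormedAddCommGroup V] [NormedSpace ℝ V]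

lemma add_rpow_smul_eq_recenter (s : ℝ) (a x y : V) (hb : a + ‖a‖ ^ s • x ≠ 0) :
    a + ‖a‖ ^ s • y = (a + ‖a‖ ^ s • x) + ‖a + ‖a‖ ^ s • x‖ ^ s •
      ((‖a‖ / ‖a + ‖a‖ ^ s • x‖) ^ s • (y - x)) := by
  have hb' : ‖a + ‖a‖ ^ s • x‖ ^ s ≠ 0 := (Real.rpow_pos_of_pos (norm_pos_iff.2 hb) s).ne'
  rw [smul_smul, Real.div_rpow (norm_nonneg _) (norm_nonneg _), mul_div_cancel₀ _ hb', smul_sub]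
  abel

lemma tendsto_norm_add_rpow_smul_div_norm {ι : Type*} {l : Filter ι} {a : ι → V} {s : ℝ}
    (hs : s < 1) (ha : Tendsto (fun i => ‖a i‖) l atTop) (x : V) :
    Tendsto (fun i => ‖a i + ‖a i‖ ^ s • x‖ / ‖a i‖) l (𝓝 1) := by
  have hdecay : Tendsto (fun i => ‖a i‖ ^ (s - 1) * ‖x‖) l (𝓝 0) := by
    have := ((tendsto_rpow_neg_atTop (sub_pos.2 hs)).comp ha).mul_const ‖x‖
    simpa only [neg_sub, zero_mul, Function.comp_def] using this
  have hdev : ∀ᶠ i in l, ‖‖a i + ‖a i‖ ^ s • x‖ / ‖a i‖ - 1‖ ≤ ‖a i‖ ^ (s - 1) * ‖x‖ := by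
    filter_upwards [ha.eventually_gt_atTop 0] with i hi
    rw [Real.norm_eq_abs, div_sub_one hi.ne', abs_div, abs_of_pos hi, div_le_iff₀ hi,
      Real.rpow_sub_one hi.ne', div_mul_eq_mul_div, div_mul_cancel₀ _ hi.ne']
    calc |‖a i + ‖a i‖ ^ s • x‖ - ‖a i‖| ≤ ‖‖a i‖ ^ s • x‖ := by
          simpa using abs_norm_sub_norm_le (a i + ‖a i‖ ^ s • x) (a i)
      _ = ‖a i‖ ^ s * ‖x‖ := by
          rw [norm_smul, Real.norm_of_nonneg (Real.rpow_nonneg (norm_nonneg _) _)]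
  simpa using (squeeze_zero_norm' hdev hdecay).add_const 1

end Rescaling

lemma chordal_le_of_tendsto_rescaled {n : ℕ} {ι : Type*} {l : Filter ι} [l.NeBot]
    {α s M R : ℝ} (hs : s < 1) {f : E n → RS n}
    (hf : ∀ a : E n, R ≤ ‖a‖ → ∀ x y : E n, ‖x‖ ≤ 2 → ‖y‖ ≤ 2 →
      chordal (f (a + ‖a‖ ^ s • x)) (f (a + ‖a‖ ^ s • y)) ≤ M * ‖x - y‖ ^ α)
    {a : ι → E n} (ha : Tendsto (fun i => ‖a i‖) l atTop) {g : E n → RS n}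
    (hconv : ∀ x, Tendsto (fun i => chordal (f (a i + ‖a i‖ ^ s • x)) (g x)) l (𝓝 0))
    {x y : E n} (hxy : ‖x - y‖ < 2) : chordal (g x) (g y) ≤ M * ‖x - y‖ ^ α := by
  have hratio := tendsto_norm_add_rpow_smul_div_norm hs ha x
  have hb : Tendsto (fun i => ‖a i + ‖a i‖ ^ s • x‖) l atTop := by
    refine (hratio.pos_mul_atTop one_pos ha).congr' ?_
    filter_upwards [ha.eventually_gt_atTop 0] with i hi
    exact div_mul_cancel₀ _ hi.ne'
  have hρ : Tendsto (fun i => (‖a i‖ / ‖a i + ‖a i‖ ^ s • x‖) ^ s) l (𝓝 1) := by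
    simpa only [inv_div, inv_one, Real.one_rpow] using
      (hratio.inv₀ one_ne_zero).rpow_const (p := s) (Or.inl (by norm_num))
  have hbound : ∀ᶠ i in l, chordal (f (a i + ‖a i‖ ^ s • x)) (f (a i + ‖a i‖ ^ s • y)) ≤
      M * ((‖a i‖ / ‖a i + ‖a i‖ ^ s • x‖) ^ s) ^ α * ‖x - y‖ ^ α := by
    have hsmall : ∀ᶠ i in l, (‖a i‖ / ‖a i + ‖a i‖ ^ s • x‖) ^ s * ‖y - x‖ ≤ 2 :=
      (hρ.mul_const _).eventually (eventually_le_nhds (by rwa [one_mul, norm_sub_rev]))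
    filter_upwards [hb.eventually_ge_atTop R, hb.eventually_gt_atTop 0, hsmall]
      with i hR hpos hsmall
    have hρ0 : 0 ≤ (‖a i‖ / ‖a i + ‖a i‖ ^ s • x‖) ^ s := by positivity
    have := hf _ hR 0 ((‖a i‖ / ‖a i + ‖a i‖ ^ s • x‖) ^ s • (y - x)) (by simp)
      (by rwa [norm_smul, Real.norm_of_nonneg hρ0])
    rwa [smul_zero, add_zero, ← add_rpow_smul_eq_recenter s (a i) x y (norm_pos_iff.1 hpos),
      zero_sub, norm_neg, norm_smul, Real.norm_of_nonneg hρ0,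
      Real.mul_rpow hρ0 (norm_nonneg _), norm_sub_rev, ← mul_assoc] at this
  have hlim : Tendsto (fun i => M * ((‖a i‖ / ‖a i + ‖a i‖ ^ s • x‖) ^ s) ^ α * ‖x - y‖ ^ α)
      l (𝓝 (M * ‖x - y‖ ^ α)) := by
    simpa only [Real.one_rpow, mul_one] using
      ((hρ.rpow_const (p := α) (Or.inl one_ne_zero)).const_mul M).mul_const (‖x - y‖ ^ α)
  exact le_of_tendsto_of_tendsto (tendsto_chordal (hconv x) (hconv y)) hlim hbound

lemma Qq_le_of_chordal_le {n : ℕ} {α C δ : ℝ} {g : E n → RS n} (hδ : 0 < δ)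
    (hg : ∀ x y, ‖x - y‖ < δ → chordal (g x) (g y) ≤ C * ‖x - y‖ ^ α) (x : E n) :
    Qq α g x ≤ ENNReal.ofReal C := by
  refine limsup_le_of_le isCobounded_le_of_bot ?_
  filter_upwards [nhdsWithin_le_nhds (Metric.ball_mem_nhds 0 hδ), self_mem_nhdsWithin]
    with h (hδh : h ∈ Metric.ball 0 δ) (h0 : h ≠ 0)
  have hpow : 0 < ‖h‖ ^ α := Real.rpow_pos_of_pos (norm_pos_iff.2 h0) α
  refine ENNReal.ofReal_le_ofReal ((div_le_iff₀ hpow).2 ?_)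
  simpa using hg (x + h) x (by simpa using hδh)

theorem stmt_3_general (n : ℕ) (α : ℝ)
    (p : ℝ) (hp : 1 < p) (f : E n → RS n) (M R : ℝ)
    (hf : ∀ a : E n, R ≤ ‖a‖ → ∀ x y : E n, ‖x‖ ≤ 2 → ‖y‖ ≤ 2 →
      chordal (f (a + ‖a‖ ^ (2 - p) • x)) (f (a + ‖a‖ ^ (2 - p) • y)) ≤ M * ‖x - y‖ ^ α)
    (a : ℕ → E n) (ha : Tendsto (fun k => ‖a k‖) atTop atTop)
    (g : E n → RS n)
    (hconv : ∀ x : E n,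
      Tendsto (fun k => chordal (f (a k + ‖a k‖ ^ (2 - p) • x)) (g x)) atTop (𝓝 0)) :
    (∃ M' : ℝ, ∀ x y : E n, ‖x - y‖ ≤ 1 → chordal (g x) (g y) ≤ M' * ‖x - y‖ ^ α) ∧
      (⨆ x : E n, Qq α g x) < ⊤ := by
  have hholder : ∀ x y : E n, ‖x - y‖ < 2 → chordal (g x) (g y) ≤ M * ‖x - y‖ ^ α :=
    fun x y hxy => chordal_le_of_tendsto_rescaled (by linarith) hf ha hconv hxy
  refine ⟨⟨M, fun x y hxy => hholder x y (by linarith)⟩, ?_⟩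
  exact (iSup_le fun x => Qq_le_of_chordal_le two_pos hholder x).trans_lt ENNReal.ofReal_lt_top

/-- Suppose `f : ℝⁿ → R̄ⁿ` satisfies the uniform Hölder condition
characterizing `p`-Yosida mappings: there are `M < ∞` and `R ≥ 1` with
`q(f(a + |a|^(2-p) x), f(a + |a|^(2-p) y)) ≤ M |x - y|^α` whenever `|a| ≥ R` and
`|x|, |y| ≤ 2`. If `|a_k| → ∞` and `x ↦ f(a_k + |a_k|^(2-p) x)` converges pointwise
(w.r.t. the chordal distance) to `g`, then `g` satisfies a uniform local Hölder
condition `q(g(x), g(y)) ≤ M' |x - y|^α` for `|x - y| ≤ 1`; in particular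
`sup_x Q_g(x) < ∞`, i.e. `g` is a Yosida mapping. -/
theorem stmt_3 (n : ℕ) (hn : 2 ≤ n) (α : ℝ) (hα0 : 0 < α) (hα1 : α ≤ 1)
    (p : ℝ) (hp : 1 < p) (f : E n → RS n) (M R : ℝ) (hR : 1 ≤ R)
    (hf : ∀ a : E n, R ≤ ‖a‖ → ∀ x y : E n, ‖x‖ ≤ 2 → ‖y‖ ≤ 2 →
      chordal (f (a + ‖a‖ ^ (2 - p) • x)) (f (a + ‖a‖ ^ (2 - p) • y)) ≤ M * ‖x - y‖ ^ α)
    (a : ℕ → E n) (ha : Tendsto (fun k => ‖a k‖) atTop atTop)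
    (g : E n → RS n)
    (hconv : ∀ x : E n,
      Tendsto (fun k => chordal (f (a k + ‖a k‖ ^ (2 - p) • x)) (g x)) atTop (𝓝 0)) :
    (∃ M' : ℝ, ∀ x y : E n, ‖x - y‖ ≤ 1 → chordal (g x) (g y) ≤ M' * ‖x - y‖ ^ α) ∧
      (⨆ x : E n, Qq α g x) < ⊤ :=
  stmt_3_general n α p hp f M R hf a ha g hconv
end
end

section
/- Let n ≥ 2, p ≥ 1, l ∈ ℕ, and let f : ℝⁿ → R̄ⁿ be any map. If (x_m) is an M_p-sequence for f with parameter l, then for every c ∈ R̄ⁿ there exists a sequence (x'_m) in ℝⁿ such that |x_m − x'_m| / |x_m|^{2−p} → 0 and q(f(x'_m), c) → 0 as m → ∞. -/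
open Filter Topology Set
open scoped ENNReal NNReal

noncomputable section

lemma chordal_nonneg' {n : ℕ} (a b : RS n) : 0 ≤ chordal a b := by
  cases a <;> cases b <;> simp only [chordal] <;> positivity

lemma one_le_sqrt_one_add_sq (t : ℝ) : 1 ≤ Real.sqrt (1 + t ^ 2) := by
  nlinarith [Real.sq_sqrt (by positivity : (0:ℝ) ≤ 1 + t ^ 2),
    Real.sqrt_nonneg (1 + t ^ 2)]

lemma chordal_ball_infinite {n : ℕ} (hn : 2 ≤ n) (c : RS n) {ε : ℝ} (hε : 0 < ε) :
    {c' : RS n | chordal c' c < ε}.Infinite := by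
  have hn0 : 0 < n := by omega
  set e : E n := EuclideanSpace.single (⟨0, hn0⟩ : Fin n) (1:ℝ) with he
  have hnorme : ‖e‖ = (1:ℝ) := by simp [he]
  have he0 : e ≠ 0 := by
    intro h; rw [h, norm_zero] at hnorme; norm_num at hnorme
  cases c with
  | some a =>
    have hinj : Function.Injective (fun k : ℕ => (some (a + (ε / (k + 2)) • e) : RS n)) := by
      intro i j hij
      simp only [Option.some.injEq, add_right_inj] at hij
      have h2 : ε / ((i:ℝ) + 2) = ε / ((j:ℝ) + 2) := by
        have := smul_left_injective ℝ he0 hij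
        exact this
      have hi : (0:ℝ) < (i:ℝ) + 2 := by positivity
      have hj2 : (0:ℝ) < (j:ℝ) + 2 := by positivity
      rw [div_eq_div_iff hi.ne' hj2.ne'] at h2
      have h3 := mul_left_cancel₀ hε.ne' h2
      have : (i:ℝ) = j := by linarith
      exact_mod_cast this
    apply Set.infinite_of_injective_forall_mem hinj
    intro k
    simp only [Set.mem_setOf_eq, chordal]
    have hne : ‖a + (ε / ((k:ℝ) + 2)) • e - a‖ = ε / ((k:ℝ) + 2) := by
      rw [add_sub_cancel_left, norm_smul, hnorme, mul_one, Real.norm_eq_abs,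
        abs_of_pos (by positivity)]
    rw [hne]
    have h1 : 1 ≤ Real.sqrt (1 + ‖a + (ε / ((k:ℝ) + 2)) • e‖ ^ 2) :=
      one_le_sqrt_one_add_sq _
    have h2 : 1 ≤ Real.sqrt (1 + ‖a‖ ^ 2) := one_le_sqrt_one_add_sq _
    calc ε / ((k:ℝ) + 2) / (Real.sqrt (1 + ‖a + (ε / ((k:ℝ) + 2)) • e‖ ^ 2) *
          Real.sqrt (1 + ‖a‖ ^ 2))
        ≤ ε / ((k:ℝ) + 2) := by
          apply div_le_self (by positivity)
          nlinarith
      _ < ε := div_lt_self hε (by nlinarith [Nat.cast_nonneg (α := ℝ) k])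
  | none =>
    have hinj : Function.Injective (fun k : ℕ => (some ((1/ε + 1 + k) • e) : RS n)) := by
      intro i j hij
      simp only [Option.some.injEq] at hij
      have := smul_left_injective ℝ he0 hij
      have : (i:ℝ) = j := by linarith [this]
      exact_mod_cast this
    apply Set.infinite_of_injective_forall_mem hinj
    intro k
    simp only [Set.mem_setOf_eq, chordal]
    set b : E n := (1/ε + 1 + (k:ℝ)) • e with hb
    have hnb : ‖b‖ = 1/ε + 1 + (k:ℝ) := by
      rw [hb, norm_smul, hnorme, mul_one, Real.norm_eq_abs, abs_of_pos (by positivity)]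
    have hbig : 1/ε < Real.sqrt (1 + ‖b‖ ^ 2) := by
      rw [Real.lt_sqrt (by positivity)]
      rw [hnb]
      nlinarith [Nat.cast_nonneg (α := ℝ) k, one_div_pos.mpr hε]
    have hpos : (0:ℝ) < Real.sqrt (1 + ‖b‖ ^ 2) := lt_trans (by positivity) hbig
    rw [div_lt_iff₀ hpos]
    have := mul_lt_mul_of_pos_left hbig hε
    rw [mul_one_div, div_self hε.ne'] at this
    linarith

/-- If `(x_m)` is an `M_p`-sequence for `f` with parameter `l`, then for
every `c ∈ R̄ⁿ` there is a sequence `(x'_m)` with `|x_m - x'_m| / |x_m|^(2-p) → 0`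
and `q(f(x'_m), c) → 0`. -/
theorem stmt_4 (n : ℕ) (hn : 2 ≤ n) (p : ℝ) (hp : 1 ≤ p) (l : ℕ)
    (f : E n → RS n) (x : ℕ → E n) (hMp : MpSeq p l f x) (c : RS n) :
    ∃ x' : ℕ → E n,
      Tendsto (fun m => ‖x m - x' m‖ / ‖x m‖ ^ (2 - p)) atTop (𝓝 0) ∧
      Tendsto (fun m => chordal (f (x' m)) c) atTop (𝓝 0) := by
  classical
  obtain ⟨hx0, hxnorm, hM⟩ := hMp
  -- Step 1: for every ε > 0, eventually there is a good point near x m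
  have hev : ∀ ε : ℝ, 0 < ε → ∀ᶠ m in atTop,
      ∃ y : E n, ‖x m - y‖ / ‖x m‖ ^ (2 - p) < ε ∧ chordal (f y) c < ε := by
    intro ε hε
    by_contra hcon
    rw [Filter.not_eventually] at hcon
    obtain ⟨φ, hφ, hφP⟩ := Filter.extraction_of_frequently_atTop hcon
    obtain ⟨hfin, -⟩ := hM φ hφ ε hε
    refine (chordal_ball_infinite hn c hε) (hfin.subset ?_)
    intro c' hc'
    simp only [Set.mem_setOf_eq] at hc' ⊢
    have hempty : f ⁻¹' {c'} ∩ ⋃ k, Bp p (x (φ k)) ε = ∅ := by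
      ext y
      simp only [Set.mem_inter_iff, Set.mem_preimage, Set.mem_singleton_iff,
        Set.mem_iUnion, Set.mem_empty_iff_false, iff_false, not_and]
      rintro hfy ⟨k, hyk⟩
      apply hφP k
      refine ⟨y, ?_, ?_⟩
      · have hpos : 0 < ‖x (φ k)‖ ^ (2 - p) :=
          Real.rpow_pos_of_pos (norm_pos_iff.mpr (hx0 _)) _
        rw [div_lt_iff₀ hpos, norm_sub_rev]
        simpa [Bp] using hyk
      · rw [hfy]; exact hc'
    rw [hempty]
    exact Set.finite_empty
  -- Step 2: diagonal extraction
  have hNex : ∀ j : ℕ, ∃ N : ℕ, ∀ m ≥ N,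
      ∃ y : E n, ‖x m - y‖ / ‖x m‖ ^ (2 - p) < 1 / ((j:ℝ) + 1) ∧
        chordal (f y) c < 1 / ((j:ℝ) + 1) := by
    intro j
    exact (eventually_atTop.mp (hev (1 / ((j:ℝ) + 1)) (by positivity)))
  choose N hNs using hNex
  set N' : ℕ → ℕ := fun j => (Finset.range (j + 1)).sup N + j with hN'
  have hNle : ∀ j, N j ≤ N' j := by
    intro j
    exact le_trans (Finset.le_sup (Finset.self_mem_range_succ j)) (Nat.le_add_right _ _)
  set J : ℕ → ℕ := fun m => Nat.findGreatest (fun j => N' j ≤ m) m with hJdef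
  set x' : ℕ → E n := fun m =>
    if h : ∃ y : E n, ‖x m - y‖ / ‖x m‖ ^ (2 - p) < 1 / ((J m : ℝ) + 1) ∧
        chordal (f y) c < 1 / ((J m : ℝ) + 1) then h.choose else x m with hx'def
  refine ⟨x', ?_, ?_⟩ <;> rw [Metric.tendsto_atTop] <;> intro ε hε <;>
    [skip; skip] <;>
    · obtain ⟨j, hjgt⟩ := exists_nat_gt (1 / ε)
      have hjlt : 1 / ((j:ℝ) + 1) < ε := by
        rw [div_lt_iff₀ (by positivity)]
        have h1 : 1 / ε < (j:ℝ) + 1 := by linarith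
        nlinarith [mul_lt_mul_of_pos_left h1 hε, mul_one_div_cancel hε.ne']
      refine ⟨max (N' (j + 1)) (j + 1), fun m hm => ?_⟩
      have h1 : N' (j + 1) ≤ m := le_trans (le_max_left _ _) hm
      have h2 : j + 1 ≤ m := le_trans (le_max_right _ _) hm
      have hJge : j + 1 ≤ J m := by
        simp only [hJdef]; exact Nat.le_findGreatest (P := fun j => N' j ≤ m) h2 h1
      have hspec : N' (J m) ≤ m := by
        simp only [hJdef]; exact Nat.findGreatest_spec (P := fun j => N' j ≤ m) h2 h1
      have hex : ∃ y : E n, ‖x m - y‖ / ‖x m‖ ^ (2 - p) < 1 / ((J m : ℝ) + 1) ∧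
          chordal (f y) c < 1 / ((J m : ℝ) + 1) :=
        hNs (J m) m (le_trans (hNle _) hspec)
      have hxm : x' m = hex.choose := dif_pos hex
      obtain ⟨hA, hB⟩ := hex.choose_spec
      have hmono : 1 / ((J m : ℝ) + 1) ≤ 1 / ((j:ℝ) + 1) := by
        apply one_div_le_one_div_of_le (by positivity)
        have : ((j:ℝ)) ≤ (J m : ℝ) := by exact_mod_cast le_trans (Nat.le_succ j) hJge
        linarith
      rw [Real.dist_eq, sub_zero, hxm]
      first
        | · rw [abs_of_nonneg (div_nonneg (norm_nonneg _)
              (Real.rpow_nonneg (norm_nonneg _) _))]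
            linarith
        | · rw [abs_of_nonneg (chordal_nonneg' _ _)]
            linarith
end
end

section
/- Let n ≥ 2, p > 1, l ∈ ℕ, and let f : ℝⁿ → R̄ⁿ be any map. Let A_1, …, A_{l+2} be distinct points of R̄ⁿ. If f possesses a μ_p-sequence with parameter l, then inf { |a − b| / |a|^{2−p} : i ≠ j, a ∈ f⁻¹(A_i) ∖ {0}, b ∈ f⁻¹(A_j) } = 0. -/
open Filter Topology Set
open scoped ENNReal NNReal

noncomputable section

lemma chordal_pos {n : ℕ} {a b : RS n} (hab : a ≠ b) : 0 < chordal a b := by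
  match a, b with
  | some a, some b =>
    have hab' : a ≠ b := fun h => hab (by rw [h])
    have h1 : (0:ℝ) < Real.sqrt (1 + ‖a‖ ^ 2) := Real.sqrt_pos.2 (by positivity)
    have h2 : (0:ℝ) < Real.sqrt (1 + ‖b‖ ^ 2) := Real.sqrt_pos.2 (by positivity)
    have : 0 < ‖a - b‖ := by
      rw [norm_pos_iff]; exact sub_ne_zero_of_ne hab'
    exact div_pos this (mul_pos h1 h2)
  | some a, none =>
    have h1 : (0:ℝ) < Real.sqrt (1 + ‖a‖ ^ 2) := Real.sqrt_pos.2 (by positivity)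
    exact div_pos one_pos h1
  | none, some b =>
    have h1 : (0:ℝ) < Real.sqrt (1 + ‖b‖ ^ 2) := Real.sqrt_pos.2 (by positivity)
    exact div_pos one_pos h1
  | none, none => exact absurd rfl hab

lemma chordal_le_one {n : ℕ} (a b : RS n) : chordal a b ≤ 1 := by
  match a, b with
  | some a, some b =>
    have h1 : (0:ℝ) < Real.sqrt (1 + ‖a‖ ^ 2) := Real.sqrt_pos.2 (by positivity)
    have h2 : (0:ℝ) < Real.sqrt (1 + ‖b‖ ^ 2) := Real.sqrt_pos.2 (by positivity)
    have e1 : Real.sqrt (1 + ‖a‖ ^ 2) ^ 2 = 1 + ‖a‖ ^ 2 := Real.sq_sqrt (by positivity)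
    have e2 : Real.sqrt (1 + ‖b‖ ^ 2) ^ 2 = 1 + ‖b‖ ^ 2 := Real.sq_sqrt (by positivity)
    show ‖a - b‖ / _ ≤ 1
    rw [div_le_one (mul_pos h1 h2)]
    have htri : ‖a - b‖ ≤ ‖a‖ + ‖b‖ := norm_sub_le a b
    have hna : 0 ≤ ‖a‖ := norm_nonneg a
    have hnb : 0 ≤ ‖b‖ := norm_nonneg b
    nlinarith [sq_nonneg (1 - ‖a‖ * ‖b‖),
      sq_nonneg (Real.sqrt (1 + ‖a‖ ^ 2) * Real.sqrt (1 + ‖b‖ ^ 2) - (‖a‖ + ‖b‖)),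
      mul_pos h1 h2]
  | some a, none =>
    show 1 / Real.sqrt (1 + ‖a‖ ^ 2) ≤ 1
    rw [div_le_one (Real.sqrt_pos.2 (by positivity))]
    have h : (1:ℝ) = Real.sqrt 1 := (Real.sqrt_one).symm
    rw [h]; exact Real.sqrt_le_sqrt (by nlinarith [sq_nonneg ‖a‖])
  | none, some b =>
    show 1 / Real.sqrt (1 + ‖b‖ ^ 2) ≤ 1
    rw [div_le_one (Real.sqrt_pos.2 (by positivity))]
    have h : (1:ℝ) = Real.sqrt 1 := (Real.sqrt_one).symm
    rw [h]; exact Real.sqrt_le_sqrt (by nlinarith [sq_nonneg ‖b‖])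
  | none, none => show (0:ℝ) ≤ 1; norm_num

lemma chordal_le_qdiam {n : ℕ} {S : Set (RS n)} {a b : RS n} (ha : a ∈ S) (hb : b ∈ S) :
    chordal a b ≤ qdiam S :=
  le_csSup ⟨1, by rintro d ⟨u, _, v, _, rfl⟩; exact chordal_le_one u v⟩ ⟨a, ha, b, hb, rfl⟩

/-- If `A_1, …, A_{l+2}` are distinct points of `R̄ⁿ` and `f` possesses a
`μ_p`-sequence with parameter `l`, then
`inf { |a - b| / |a|^(2-p) : i ≠ j, a ∈ f⁻¹(A_i) \ {0}, b ∈ f⁻¹(A_j) } = 0`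
(in particular the set of such quotients is nonempty). -/
theorem stmt_9 (n : ℕ) (hn : 2 ≤ n) (p : ℝ) (hp : 1 < p) (l : ℕ)
    (f : E n → RS n) (A : Fin (l + 2) → RS n) (hA : Function.Injective A)
    (x : ℕ → E n) (hMu : MuSeq p l f x) :
    {d : ℝ | ∃ i j : Fin (l + 2), ∃ a b : E n, i ≠ j ∧ f a = A i ∧ a ≠ 0 ∧ f b = A j ∧
        d = ‖a - b‖ / ‖a‖ ^ (2 - p)}.Nonempty ∧
    sInf {d : ℝ | ∃ i j : Fin (l + 2), ∃ a b : E n, i ≠ j ∧ f a = A i ∧ a ≠ 0 ∧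
        f b = A j ∧ d = ‖a - b‖ / ‖a‖ ^ (2 - p)} = 0 := by
  classical
  obtain ⟨hx0, hxinf, L, r, hLpos, hrpos, _, _, hL0, hr0, hcov⟩ := hMu
  set S : Set ℝ := {d : ℝ | ∃ i j : Fin (l + 2), ∃ a b : E n, i ≠ j ∧ f a = A i ∧ a ≠ 0 ∧
      f b = A j ∧ d = ‖a - b‖ / ‖a‖ ^ (2 - p)} with hS
  -- minimal chordal distance between the A's
  set P := (Finset.univ : Finset (Fin (l+2) × Fin (l+2))).filter (fun q => q.1 ≠ q.2) with hP
  have hPne : P.Nonempty := by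
    refine ⟨(⟨0, by omega⟩, ⟨1, by omega⟩), ?_⟩
    simp [hP, Fin.ext_iff]
  set ε₀ := P.inf' hPne (fun q => chordal (A q.1) (A q.2)) with hε₀
  have hε₀pos : 0 < ε₀ := by
    rw [hε₀, Finset.lt_inf'_iff]
    intro q hq
    rw [hP, Finset.mem_filter] at hq
    exact chordal_pos (fun h => hq.2 (hA h))
  have hε₀le : ∀ i j : Fin (l+2), i ≠ j → ε₀ ≤ chordal (A i) (A j) := by
    intro i j hij
    have hmem : (i, j) ∈ P := by
      rw [hP, Finset.mem_filter]
      exact ⟨Finset.mem_univ _, hij⟩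
    exact Finset.inf'_le _ hmem
  set C : ℝ := 2 + (2:ℝ) ^ (p - 2) with hC
  have hCpos : 0 < C := by
    have : (0:ℝ) < (2:ℝ) ^ (p - 2) := Real.rpow_pos_of_pos two_pos _
    linarith
  -- key: arbitrarily small elements of S
  have key : ∀ ε : ℝ, 0 < ε → ∃ d ∈ S, d < ε := by
    intro ε hε
    have h1 : ∀ᶠ m in atTop, L m < ε₀ := hL0.eventually_lt_const hε₀pos
    have h2 : ∀ᶠ m in atTop, r m < 1/2 := hr0.eventually_lt_const (by norm_num)
    have h3 : ∀ᶠ m in atTop, r m < ε / (2 * C) := hr0.eventually_lt_const (by positivity)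
    have h4 : ∀ᶠ m in atTop, (1:ℝ) ≤ ‖x m‖ := hxinf.eventually_ge_atTop 1
    obtain ⟨m, ⟨⟨hm1, hm2⟩, hm3⟩, hm4⟩ := (((h1.and h2).and h3).and h4).exists
    obtain ⟨Es, hEd, hEc⟩ := hcov m
    -- pigeonhole: at most l of the A's lie in the exceptional sets
    set T := Finset.univ.filter (fun i : Fin (l+2) => A i ∈ ⋃ j, Es j) with hT
    have hTcard : T.card ≤ l := by
      have hmaps : ∀ i ∈ T,
          (if h : ∃ j : Fin l, A i ∈ Es j then (h.choose : ℕ) else 0) ∈ Finset.range l := by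
        intro i hi
        rw [hT, Finset.mem_filter] at hi
        have hi2 : ∃ j : Fin l, A i ∈ Es j := Set.mem_iUnion.1 hi.2
        rw [dif_pos hi2]
        exact Finset.mem_range.2 hi2.choose.isLt
      have hinj : Set.InjOn
          (fun i => if h : ∃ j : Fin l, A i ∈ Es j then (h.choose : ℕ) else 0) (T : Set _) := by
        intro i hi i' hi' hgi
        rw [Finset.mem_coe, hT, Finset.mem_filter] at hi hi'
        have h : ∃ j : Fin l, A i ∈ Es j := Set.mem_iUnion.1 hi.2
        have h' : ∃ j : Fin l, A i' ∈ Es j := Set.mem_iUnion.1 hi'.2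
        simp only [dif_pos h, dif_pos h'] at hgi
        have hjj : h.choose = h'.choose := Fin.val_injective hgi
        by_contra hne
        have hc1 : chordal (A i) (A i') ≤ qdiam (Es h.choose) :=
          chordal_le_qdiam h.choose_spec (hjj ▸ h'.choose_spec)
        have hc2 := hEd h.choose
        have hc3 := hε₀le i i' hne
        linarith
      have := Finset.card_le_card_of_injOn _ hmaps hinj
      simpa using this
    have h2card : 1 < Tᶜ.card := by
      rw [Finset.card_compl]
      simp only [Fintype.card_fin]
      omega
    obtain ⟨i, hi, j, hj, hij⟩ := Finset.one_lt_card.1 h2card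
    have hAi : A i ∉ ⋃ j, Es j := by
      intro h
      rw [Finset.mem_compl, hT, Finset.mem_filter] at hi
      exact hi ⟨Finset.mem_univ _, h⟩
    have hAj : A j ∉ ⋃ j, Es j := by
      intro h
      rw [Finset.mem_compl, hT, Finset.mem_filter] at hj
      exact hj ⟨Finset.mem_univ _, h⟩
    obtain ⟨a, haB, hfa⟩ := hEc (A i) hAi
    obtain ⟨b, hbB, hfb⟩ := hEc (A j) hAj
    have haB' : ‖a - x m‖ < r m * ‖x m‖ ^ (2 - p) := haB
    have hbB' : ‖b - x m‖ < r m * ‖x m‖ ^ (2 - p) := hbB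
    have hXpos : (0:ℝ) < ‖x m‖ := by linarith
    have hxpow : ‖x m‖ ^ (2 - p) ≤ ‖x m‖ := by
      calc ‖x m‖ ^ (2 - p) ≤ ‖x m‖ ^ (1:ℝ) :=
            Real.rpow_le_rpow_of_exponent_le hm4 (by linarith)
        _ = ‖x m‖ := Real.rpow_one _
    have hsm : r m * ‖x m‖ ^ (2 - p) ≤ ‖x m‖ / 2 := by
      have h1 : r m * ‖x m‖ ^ (2 - p) ≤ r m * ‖x m‖ :=
        mul_le_mul_of_nonneg_left hxpow (hrpos m).le
      nlinarith
    have haxb : ‖a - x m‖ < ‖x m‖ / 2 := lt_of_lt_of_le haB' hsm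
    have hbxb : ‖b - x m‖ < ‖x m‖ / 2 := lt_of_lt_of_le hbB' hsm
    have habs1 := abs_le.1 (abs_norm_sub_norm_le a (x m))
    have hal : ‖x m‖ / 2 ≤ ‖a‖ := by linarith [habs1.1]
    have hau : ‖a‖ ≤ 2 * ‖x m‖ := by linarith [habs1.2]
    have hapos : (0:ℝ) < ‖a‖ := by linarith
    have ha0 : a ≠ 0 := by
      intro h; rw [h, norm_zero] at hapos; exact lt_irrefl 0 hapos
    have haepos : (0:ℝ) < ‖a‖ ^ (2 - p) := Real.rpow_pos_of_pos hapos _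
    have hXepos : (0:ℝ) < ‖x m‖ ^ (2 - p) := Real.rpow_pos_of_pos hXpos _
    -- bound on the distance between a and b
    have habd : ‖a - b‖ ≤ 2 * r m * ‖x m‖ ^ (2 - p) := by
      have h1 : a - b = (a - x m) + (x m - b) := by abel
      have h2 : ‖a - b‖ ≤ ‖a - x m‖ + ‖x m - b‖ := by
        rw [h1]; exact norm_add_le _ _
      rw [norm_sub_rev (x m) b] at h2
      linarith
    -- ratio bound
    have hratio : ‖x m‖ ^ (2 - p) / ‖a‖ ^ (2 - p) ≤ C := by
      rcases le_or_gt 0 (2 - p) with he | he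
      · have h1 : ‖x m‖ ^ (2 - p) ≤ (2 * ‖a‖) ^ (2 - p) :=
          Real.rpow_le_rpow hXpos.le (by linarith) he
        rw [Real.mul_rpow (by norm_num) hapos.le] at h1
        have h2 : (2:ℝ) ^ (2 - p) ≤ 2 := by
          calc (2:ℝ) ^ (2 - p) ≤ (2:ℝ) ^ (1:ℝ) :=
                Real.rpow_le_rpow_of_exponent_le one_le_two (by linarith)
            _ = 2 := Real.rpow_one 2
        rw [div_le_iff₀ haepos]
        have h20 : (0:ℝ) < (2:ℝ) ^ (p - 2) := Real.rpow_pos_of_pos two_pos _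
        have h5 := mul_le_mul_of_nonneg_right h2 haepos.le
        have h6 : 2 * ‖a‖ ^ (2 - p) ≤ C * ‖a‖ ^ (2 - p) :=
          mul_le_mul_of_nonneg_right (by rw [hC]; linarith) haepos.le
        linarith
      · have h1 : (2 * ‖x m‖) ^ (2 - p) ≤ ‖a‖ ^ (2 - p) :=
          Real.rpow_le_rpow_of_nonpos hapos hau he.le
        rw [Real.mul_rpow (by norm_num) hXpos.le] at h1
        have hinv : (2:ℝ) ^ (2 - p) * (2:ℝ) ^ (p - 2) = 1 := by
          rw [← Real.rpow_add two_pos]; norm_num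
        have h20 : (0:ℝ) < (2:ℝ) ^ (p - 2) := Real.rpow_pos_of_pos two_pos _
        rw [div_le_iff₀ haepos]
        have hkey := mul_le_mul_of_nonneg_left h1 h20.le
        have heq : (2:ℝ) ^ (p - 2) * ((2:ℝ) ^ (2 - p) * ‖x m‖ ^ (2 - p)) = ‖x m‖ ^ (2 - p) := by
          rw [← mul_assoc, mul_comm ((2:ℝ) ^ (p - 2)) _, hinv, one_mul]
        rw [heq] at hkey
        have h6 : (2:ℝ) ^ (p - 2) * ‖a‖ ^ (2 - p) ≤ C * ‖a‖ ^ (2 - p) :=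
          mul_le_mul_of_nonneg_right (by rw [hC]; linarith) haepos.le
        linarith
    -- final estimate
    have hdlt : ‖a - b‖ / ‖a‖ ^ (2 - p) < ε := by
      have c1 : ‖a - b‖ / ‖a‖ ^ (2 - p) ≤ (2 * r m * ‖x m‖ ^ (2 - p)) / ‖a‖ ^ (2 - p) := by
        gcongr
      have c2 : (2 * r m * ‖x m‖ ^ (2 - p)) / ‖a‖ ^ (2 - p)
          = 2 * r m * (‖x m‖ ^ (2 - p) / ‖a‖ ^ (2 - p)) := by ring
      have c3 : 2 * r m * (‖x m‖ ^ (2 - p) / ‖a‖ ^ (2 - p)) ≤ 2 * r m * C :=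
        mul_le_mul_of_nonneg_left hratio (by linarith [hrpos m])
      have c4 : 2 * r m * C < ε := by
        have h7 : r m * (2 * C) < ε := (lt_div_iff₀ (by positivity)).1 hm3
        calc 2 * r m * C = r m * (2 * C) := by ring
          _ < ε := h7
      calc ‖a - b‖ / ‖a‖ ^ (2 - p)
          ≤ 2 * r m * ‖x m‖ ^ (2 - p) / ‖a‖ ^ (2 - p) := c1
        _ = 2 * r m * (‖x m‖ ^ (2 - p) / ‖a‖ ^ (2 - p)) := c2
        _ ≤ 2 * r m * C := c3
        _ < ε := c4
    exact ⟨‖a - b‖ / ‖a‖ ^ (2 - p), ⟨i, j, a, b, hij, hfa, ha0, hfb, rfl⟩, hdlt⟩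
  have hSnonneg : ∀ d ∈ S, (0:ℝ) ≤ d := by
    rintro d ⟨i, j, a, b, -, -, -, -, rfl⟩
    positivity
  have hbdd : BddBelow S := ⟨0, fun d hd => hSnonneg d hd⟩
  obtain ⟨d₁, hd₁, -⟩ := key 1 one_pos
  refine ⟨⟨d₁, hd₁⟩, le_antisymm ?_ (le_csInf ⟨d₁, hd₁⟩ hSnonneg)⟩
  refine le_of_forall_pos_le_add ?_
  intro ε hε
  obtain ⟨d, hd, hdε⟩ := key ε hε
  calc sInf S ≤ d := csInf_le hbdd hd
    _ ≤ 0 + ε := by linarith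
end
end
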